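/- Let p₀ ∈ U and let v₀ ∈ ℝ⁴ be a lightlike vector with v₀₁² + v₀₂² > 0. Then h̃_{v₀}(p₀) = 0, (∂h̃_{v₀}/∂x)(p₀) = (∂h̃_{v₀}/∂y)(p₀) = 0 and det 𝓗(h̃_{v₀})(p₀) = 0 (where 𝓗 is the Hessian matrix in the coordinates (x,y)) hold simultaneously if and only if there exists σ ∈ {+1,−1} such that ṽ₀ is a nonzero scalar multiple of (e₁+σe₂)(p₀), ⟨X(p₀), ṽ₀⟩ = √(v₀₁² + v₀₂²), and the lightlike Gauss–Kronecker curvature K_l(1,σ) vanishes at p₀. -/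

import Mathlib

set_option maxHeartbeats 1600000


noncomputable section

def pprod (x y : Fin 4 → ℝ) : ℝ :=
  -(x 0 * y 0) - x 1 * y 1 + x 2 * y 2 + x 3 * y 3

def pdx (f : ℝ × ℝ → ℝ) (p : ℝ × ℝ) : ℝ := fderiv ℝ f p (1, 0)
def pdy (f : ℝ × ℝ → ℝ) (p : ℝ × ℝ) : ℝ := fderiv ℝ f p (0, 1)

def Dx (X : ℝ × ℝ → Fin 4 → ℝ) (p : ℝ × ℝ) : Fin 4 → ℝ := fderiv ℝ X p (1, 0)
def Dy (X : ℝ × ℝ → Fin 4 → ℝ) (p : ℝ × ℝ) : Fin 4 → ℝ := fderiv ℝ X p (0, 1)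
def Dxx (X : ℝ × ℝ → Fin 4 → ℝ) (p : ℝ × ℝ) : Fin 4 → ℝ := Dx (Dx X) p
def Dxy (X : ℝ × ℝ → Fin 4 → ℝ) (p : ℝ × ℝ) : Fin 4 → ℝ := Dy (Dx X) p
def Dyy (X : ℝ × ℝ → Fin 4 → ℝ) (p : ℝ × ℝ) : Fin 4 → ℝ := Dy (Dy X) p

def detHess (f : ℝ × ℝ → ℝ) (p : ℝ × ℝ) : ℝ :=
  pdx (pdx f) p * pdy (pdy f) p - (pdy (pdx f) p) ^ 2

def IsLorentzSurface (U : Set (ℝ × ℝ)) (X : ℝ × ℝ → Fin 4 → ℝ) : Prop :=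
  IsOpen U ∧ ContDiffOn ℝ (⊤ : ℕ∞) X U ∧
    ∀ p ∈ U,
      pprod (Dx X p) (Dx X p) * pprod (Dy X p) (Dy X p) - (pprod (Dx X p) (Dy X p)) ^ 2 < 0

def IsNormalFrame (U : Set (ℝ × ℝ)) (X e1 e2 : ℝ × ℝ → Fin 4 → ℝ) : Prop :=
  ContDiffOn ℝ (⊤ : ℕ∞) e1 U ∧ ContDiffOn ℝ (⊤ : ℕ∞) e2 U ∧
    ∀ p ∈ U,
      pprod (e1 p) (e1 p) = -1 ∧ pprod (e2 p) (e2 p) = 1 ∧ pprod (e1 p) (e2 p) = 0 ∧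
      pprod (e1 p) (Dx X p) = 0 ∧ pprod (e1 p) (Dy X p) = 0 ∧
      pprod (e2 p) (Dx X p) = 0 ∧ pprod (e2 p) (Dy X p) = 0

def xi (e1 e2 : ℝ × ℝ → Fin 4 → ℝ) (σ : ℝ) (p : ℝ × ℝ) : ℝ :=
  Real.sqrt ((e1 p 0 + σ * e2 p 0) ^ 2 + (e1 p 1 + σ * e2 p 1) ^ 2)

def LG (e1 e2 : ℝ × ℝ → Fin 4 → ℝ) (σ : ℝ) (p : ℝ × ℝ) : Fin 4 → ℝ :=
  (xi e1 e2 σ p)⁻¹ • (e1 p + σ • e2 p)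

def KlVanish (X e1 e2 : ℝ × ℝ → Fin 4 → ℝ) (σ : ℝ) (p : ℝ × ℝ) : Prop :=
  pprod (Dxx X p) (e1 p + σ • e2 p) * pprod (Dyy X p) (e1 p + σ • e2 p)
    - (pprod (Dxy X p) (e1 p + σ • e2 p)) ^ 2 = 0

/-! ### auxiliary lemmas -/

lemma pprod_comm (x y : Fin 4 → ℝ) : pprod x y = pprod y x := by
  simp only [pprod]; ring

lemma pprod_add_right (x y z : Fin 4 → ℝ) : pprod x (y + z) = pprod x y + pprod x z := by
  simp only [pprod, Pi.add_apply]; ring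

lemma pprod_sub_right (x y z : Fin 4 → ℝ) : pprod x (y - z) = pprod x y - pprod x z := by
  simp only [pprod, Pi.sub_apply]; ring

lemma pprod_smul_right (x : Fin 4 → ℝ) (s : ℝ) (y : Fin 4 → ℝ) :
    pprod x (s • y) = s * pprod x y := by
  simp only [pprod, Pi.smul_apply, smul_eq_mul]; ring

lemma det4 (p q r : ℝ) :
    (Matrix.of ![![(-1:ℝ),0,0,0], ![0,1,0,0], ![0,0,p,q], ![0,0,q,r]]).det
      = -(p*r - q^2) := by
  simp [Matrix.det_succ_row_zero, Fin.sum_univ_succ]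
  ring

lemma finsucc0 : (Fin.succ 0 : Fin 4) = 1 := rfl
lemma finsucc1 : (Fin.succ 1 : Fin 4) = 2 := rfl
lemma finsucc2 : (Fin.succ 2 : Fin 4) = 3 := rfl

lemma decomp (a b c d u : Fin 4 → ℝ)
    (h11 : pprod a a = -1) (h22 : pprod b b = 1) (h12 : pprod a b = 0)
    (h13 : pprod a c = 0) (h14 : pprod a d = 0) (h23 : pprod b c = 0) (h24 : pprod b d = 0)
    (hg : pprod c c * pprod d d - (pprod c d)^2 < 0)
    (hu1 : pprod a u = 0) (hu2 : pprod b u = 0) (hu3 : pprod c u = 0) (hu4 : pprod d u = 0) :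
    u = 0 := by
  classical
  set B : Matrix (Fin 4) (Fin 4) ℝ := Matrix.of ![a, b, c, d] with hB
  set J : Matrix (Fin 4) (Fin 4) ℝ := !![-1,0,0,0; 0,-1,0,0; 0,0,1,0; 0,0,0,1] with hJ
  simp only [pprod] at h11 h22 h12 h13 h14 h23 h24 hu1 hu2 hu3 hu4 hg
  have hG : B * J * B.transpose = Matrix.of ![![(-1:ℝ),0,0,0], ![0,1,0,0],
      ![0,0,pprod c c, pprod c d], ![0,0,pprod c d, pprod d d]] := by
    ext i j
    fin_cases i <;> fin_cases j <;>
      simp [hB, hJ, Matrix.mul_apply, Fin.sum_univ_four, pprod, Matrix.vecHead, Matrix.vecTail, finsucc0, finsucc1, finsucc2] <;>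
      first
        | ring1
        | linear_combination h11
        | linear_combination h12
        | linear_combination h13
        | linear_combination h14
        | linear_combination h22
        | linear_combination h23
        | linear_combination h24
  have hdetG : (B * J * B.transpose).det = -(pprod c c * pprod d d - (pprod c d)^2) := by
    rw [hG, det4]
  have hdetJ : J.det = 1 := by
    rw [hJ]; simp [Matrix.det_succ_row_zero, Fin.sum_univ_succ]
  have hdetB : B.det ≠ 0 := by
    intro h0
    rw [Matrix.det_mul, Matrix.det_mul, Matrix.det_transpose, h0, hdetJ] at hdetG
    simp only [pprod] at hdetG
    nlinarith [hdetG]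
  have hw : B.mulVec ![-u 0, -u 1, u 2, u 3] = 0 := by
    ext i
    fin_cases i <;>
      simp [hB, Matrix.mulVec, dotProduct, Fin.sum_univ_four] <;>
      [ linear_combination hu1; linear_combination hu2; linear_combination hu3; linear_combination hu4]
  have hinv : B⁻¹ * B = 1 := Matrix.nonsing_inv_mul B (isUnit_iff_ne_zero.mpr hdetB)
  have hz : (![-u 0, -u 1, u 2, u 3] : Fin 4 → ℝ) = 0 := by
    calc (![-u 0, -u 1, u 2, u 3] : Fin 4 → ℝ)
        = (1 : Matrix (Fin 4) (Fin 4) ℝ).mulVec ![-u 0, -u 1, u 2, u 3] := by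
          rw [Matrix.one_mulVec]
      _ = B⁻¹.mulVec (B.mulVec ![-u 0, -u 1, u 2, u 3]) := by
          rw [Matrix.mulVec_mulVec, hinv]
      _ = 0 := by rw [hw, Matrix.mulVec_zero]
  funext j
  fin_cases j <;>
    [ (have := congrFun hz 0; simpa using neg_eq_zero.mp (by simpa using this));
      (have := congrFun hz 1; simpa using neg_eq_zero.mp (by simpa using this));
      (have := congrFun hz 2; simpa using this);
      (have := congrFun hz 3; simpa using this) ]

def Lmap (v : Fin 4 → ℝ) : (Fin 4 → ℝ) →L[ℝ] ℝ :=
  (-(v 0)) • ContinuousLinearMap.proj 0 + (-(v 1)) • ContinuousLinearMap.proj 1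
    + v 2 • ContinuousLinearMap.proj 2 + v 3 • ContinuousLinearMap.proj 3

lemma Lmap_apply (v w : Fin 4 → ℝ) : Lmap v w = pprod w v := by
  simp [Lmap, pprod]; ring

lemma fderiv_pprod_comp {g : ℝ × ℝ → Fin 4 → ℝ} {p : ℝ × ℝ}
    (hg : DifferentiableAt ℝ g p) (v : Fin 4 → ℝ) :
    fderiv ℝ (fun q => pprod (g q) v) p = (Lmap v).comp (fderiv ℝ g p) := by
  have hfun : (fun q => pprod (g q) v) = fun q => Lmap v (g q) :=
    funext fun q => (Lmap_apply v (g q)).symm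
  rw [hfun]
  exact (((Lmap v).hasFDerivAt).comp p hg.hasFDerivAt).fderiv

lemma diff_of_contDiffOn {U : Set (ℝ × ℝ)} {X : ℝ × ℝ → Fin 4 → ℝ}
    (hU : IsOpen U) (hX : ContDiffOn ℝ (⊤ : ℕ∞) X U) {p : ℝ × ℝ} (hp : p ∈ U) :
    DifferentiableAt ℝ X p :=
  (hX.contDiffAt (hU.mem_nhds hp)).differentiableAt (by simp)

lemma diff_Dx {U : Set (ℝ × ℝ)} {X : ℝ × ℝ → Fin 4 → ℝ}
    (hU : IsOpen U) (hX : ContDiffOn ℝ (⊤ : ℕ∞) X U) {p : ℝ × ℝ} (hp : p ∈ U) (w : ℝ × ℝ) :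
    DifferentiableAt ℝ (fun q => fderiv ℝ X q w) p := by
  have h1 : ContDiffOn ℝ 1 (fderiv ℝ X) U := hX.fderiv_of_isOpen hU (WithTop.coe_le_coe.mpr le_top)
  have h2 : ContDiffOn ℝ 1 (fun q => fderiv ℝ X q w) U :=
    h1.clm_apply contDiffOn_const
  exact (h2.contDiffAt (hU.mem_nhds hp)).differentiableAt one_ne_zero

lemma first_eq {U : Set (ℝ × ℝ)} {X : ℝ × ℝ → Fin 4 → ℝ}
    (hU : IsOpen U) (hX : ContDiffOn ℝ (⊤ : ℕ∞) X U) {q : ℝ × ℝ} (hq : q ∈ U)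
    (v : Fin 4 → ℝ) (c : ℝ) (w : ℝ × ℝ) :
    fderiv ℝ (fun p => pprod (X p) v - c) q w = pprod (fderiv ℝ X q w) v := by
  rw [fderiv_sub_const, fderiv_pprod_comp (diff_of_contDiffOn hU hX hq) v]
  simp [Lmap_apply]

lemma second_eq {U : Set (ℝ × ℝ)} {X : ℝ × ℝ → Fin 4 → ℝ}
    (hU : IsOpen U) (hX : ContDiffOn ℝ (⊤ : ℕ∞) X U) {p : ℝ × ℝ} (hp : p ∈ U)
    (v : Fin 4 → ℝ) (c : ℝ) (w₁ w₂ : ℝ × ℝ) :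
    fderiv ℝ (fun q => fderiv ℝ (fun p' => pprod (X p') v - c) q w₁) p w₂
      = pprod (fderiv ℝ (fun q => fderiv ℝ X q w₁) p w₂) v := by
  have hev : (fun q => fderiv ℝ (fun p' => pprod (X p') v - c) q w₁)
      =ᶠ[nhds p] (fun q => pprod (fderiv ℝ X q w₁) v) := by
    filter_upwards [hU.mem_nhds hp] with q hq
    rw [first_eq hU hX hq]
  rw [hev.fderiv_eq, fderiv_pprod_comp (diff_Dx hU hX hp w₁) v]
  simp [Lmap_apply]

theorem stmt11 (U : Set (ℝ × ℝ)) (X e1 e2 : ℝ × ℝ → Fin 4 → ℝ)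
    (hsurf : IsLorentzSurface U X) (hframe : IsNormalFrame U X e1 e2)
    (p₀ : ℝ × ℝ) (hp₀ : p₀ ∈ U)
    (v₀ : Fin 4 → ℝ) (hv₀ : pprod v₀ v₀ = 0) (hv12 : v₀ 0 ^ 2 + v₀ 1 ^ 2 > 0)
    (vt : Fin 4 → ℝ) (hvt : vt = (Real.sqrt (v₀ 0 ^ 2 + v₀ 1 ^ 2))⁻¹ • v₀)
    (ht : (ℝ × ℝ) → ℝ)
    (hht : ht = fun p => pprod (X p) vt - Real.sqrt (v₀ 0 ^ 2 + v₀ 1 ^ 2)) :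
    (ht p₀ = 0 ∧ pdx ht p₀ = 0 ∧ pdy ht p₀ = 0 ∧ detHess ht p₀ = 0) ↔
      (∃ σ : ℝ, (σ = 1 ∨ σ = -1) ∧
        (∃ μ : ℝ, μ ≠ 0 ∧ vt = μ • (e1 p₀ + σ • e2 p₀)) ∧
        pprod (X p₀) vt = Real.sqrt (v₀ 0 ^ 2 + v₀ 1 ^ 2) ∧
        KlVanish X e1 e2 σ p₀) := by
  obtain ⟨hU, hX, hGram⟩ := hsurf
  obtain ⟨-, -, hfr⟩ := hframe
  obtain ⟨f11, f22, f12, fx1, fy1, fx2, fy2⟩ := hfr p₀ hp₀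
  set c : ℝ := Real.sqrt (v₀ 0 ^ 2 + v₀ 1 ^ 2) with hc
  have hcpos : 0 < c := Real.sqrt_pos.mpr hv12
  have hc2 : c ^ 2 = v₀ 0 ^ 2 + v₀ 1 ^ 2 := Real.sq_sqrt hv12.le
  -- derivative identities
  have hpdx : pdx ht p₀ = pprod (Dx X p₀) vt := by
    rw [hht]; exact first_eq hU hX hp₀ vt c (1, 0)
  have hpdy : pdy ht p₀ = pprod (Dy X p₀) vt := by
    rw [hht]; exact first_eq hU hX hp₀ vt c (0, 1)
  have hxx : pdx (pdx ht) p₀ = pprod (Dxx X p₀) vt := by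
    rw [hht]; exact second_eq hU hX hp₀ vt c (1, 0) (1, 0)
  have hyx : pdy (pdx ht) p₀ = pprod (Dxy X p₀) vt := by
    rw [hht]; exact second_eq hU hX hp₀ vt c (1, 0) (0, 1)
  have hyy : pdy (pdy ht) p₀ = pprod (Dyy X p₀) vt := by
    rw [hht]; exact second_eq hU hX hp₀ vt c (0, 1) (0, 1)
  -- basic facts about vt
  have hvtvt : pprod vt vt = 0 := by
    rw [hvt]
    simp only [pprod, Pi.smul_apply, smul_eq_mul] at hv₀ ⊢
    linear_combination ((Real.sqrt (v₀ 0 ^ 2 + v₀ 1 ^ 2))⁻¹)^2 * hv₀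
  have hvt01 : vt 0 ^ 2 + vt 1 ^ 2 = 1 := by
    rw [hvt]
    simp only [Pi.smul_apply, smul_eq_mul]
    have : ((Real.sqrt (v₀ 0 ^ 2 + v₀ 1 ^ 2))⁻¹ * v₀ 0) ^ 2
        + ((Real.sqrt (v₀ 0 ^ 2 + v₀ 1 ^ 2))⁻¹ * v₀ 1) ^ 2
        = (c⁻¹) ^ 2 * (v₀ 0 ^ 2 + v₀ 1 ^ 2) := by rw [hc]; ring
    rw [this, ← hc2]
    field_simp
  constructor
  · rintro ⟨h0, h1, h2, h3⟩
    rw [hpdx] at h1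
    rw [hpdy] at h2
    rw [detHess, hxx, hyx, hyy] at h3
    set E := e1 p₀ with hE
    set F := e2 p₀ with hF
    set a : ℝ := -(pprod E vt) with ha
    set b : ℝ := pprod F vt with hb
    have hu : vt - (a • E + b • F) = 0 := by
      apply decomp E F (Dx X p₀) (Dy X p₀) _ f11 f22 f12 fx1 fy1 fx2 fy2 (hGram p₀ hp₀)
      · rw [pprod_sub_right, pprod_add_right, pprod_smul_right, pprod_smul_right, f11, f12, ha]
        ring
      · rw [pprod_sub_right, pprod_add_right, pprod_smul_right, pprod_smul_right,
          pprod_comm F E, f12, f22, hb]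
        ring
      · rw [pprod_sub_right, pprod_add_right, pprod_smul_right, pprod_smul_right,
          pprod_comm (Dx X p₀) E, pprod_comm (Dx X p₀) F, fx1, fx2,
          pprod_comm (Dx X p₀) vt] at *
        rw [h1]; ring
      · rw [pprod_sub_right, pprod_add_right, pprod_smul_right, pprod_smul_right,
          pprod_comm (Dy X p₀) E, pprod_comm (Dy X p₀) F, fy1, fy2,
          pprod_comm (Dy X p₀) vt] at *
        rw [h2]; ring
    have hdec : vt = a • E + b • F := by
      have := sub_eq_zero.mp hu; exact this
    have hab : -a ^ 2 + b ^ 2 = 0 := by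
      have h' : pprod vt vt = -a ^ 2 + b ^ 2 := by
        rw [hdec, pprod_add_right, pprod_smul_right, pprod_smul_right,
          pprod_comm (a • E + b • F) E, pprod_comm (a • E + b • F) F,
          pprod_add_right, pprod_add_right, pprod_smul_right, pprod_smul_right,
          pprod_smul_right, pprod_smul_right, f11, f22, f12, pprod_comm F E, f12]
        ring
      rw [hvtvt] at h'; linarith
    have hane : a ≠ 0 := by
      intro ha0
      have hb0 : b = 0 := by
        have : b ^ 2 = 0 := by rw [ha0] at hab; linarith
        exact pow_eq_zero_iff (by norm_num : (2:ℕ) ≠ 0) |>.mp this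
      rw [ha0, hb0] at hdec
      simp only [zero_smul, add_zero, zero_add] at hdec
      rw [hdec] at hvt01
      simp at hvt01
    have hfac : (b - a) * (b + a) = 0 := by linear_combination hab
    refine ⟨b / a, ?_, ⟨a, hane, ?_⟩, ?_, ?_⟩
    · rcases mul_eq_zero.mp hfac with h | h
      · left; field_simp; linarith
      · right; field_simp; linarith
    · rw [hdec]; funext i
      simp only [Pi.smul_apply, Pi.add_apply, smul_eq_mul]
      field_simp
    · rw [hht] at h0; simp only at h0; linarith
    · have hvtW : vt = a • (E + (b / a) • F) := by
        rw [hdec]; funext i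
        simp only [Pi.smul_apply, Pi.add_apply, smul_eq_mul]
        field_simp
      rw [hvtW] at h3
      rw [pprod_smul_right, pprod_smul_right, pprod_smul_right] at h3
      have h4 : a ^ 2 * (pprod (Dxx X p₀) (E + (b / a) • F) * pprod (Dyy X p₀) (E + (b / a) • F)
          - pprod (Dxy X p₀) (E + (b / a) • F) ^ 2) = 0 := by linear_combination h3
      have h5 := (mul_eq_zero.mp h4).resolve_left (pow_ne_zero 2 hane)
      exact h5
  · rintro ⟨σ, hσ, ⟨μ, hμ, hvtW⟩, hX0, hKl⟩
    have hE1 : pprod (Dx X p₀) (e1 p₀) = 0 := (pprod_comm _ _).trans fx1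
    have hE2 : pprod (Dx X p₀) (e2 p₀) = 0 := (pprod_comm _ _).trans fx2
    have hF1 : pprod (Dy X p₀) (e1 p₀) = 0 := (pprod_comm _ _).trans fy1
    have hF2 : pprod (Dy X p₀) (e2 p₀) = 0 := (pprod_comm _ _).trans fy2
    refine ⟨?_, ?_, ?_, ?_⟩
    · rw [hht]; simp only; rw [hX0]; ring
    · rw [hpdx, hvtW, pprod_smul_right, pprod_add_right, pprod_smul_right, hE1, hE2]; ring
    · rw [hpdy, hvtW, pprod_smul_right, pprod_add_right, pprod_smul_right, hF1, hF2]; ring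
    · rw [detHess, hxx, hyx, hyy, hvtW, pprod_smul_right, pprod_smul_right, pprod_smul_right]
      unfold KlVanish at hKl
      linear_combination μ ^ 2 * hKl
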